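/- arXiv:1902.03884 — 7 statements merged into one kernel-verified Lean document; each statement's English description precedes it below -/
import Mathlib

section
/- Let a and b be the functions a = p₁²/(u₁−u₂) + p₂²/(u₂−u₁) − u₁² − u₁u₂ − u₂² and b = u₂·p₁²/(u₂−u₁) + u₁·p₂²/(u₁−u₂) + (u₁+u₂)·u₁·u₂ on the open set {u₁ ≠ u₂} ⊂ ℝ⁴. Then {a, b} = 0 identically, where {·,·} is the canonical Poisson bracket; i.e. a and b are in involution. -/
/-!
`a` and `b` are the Stäckel integrals of the separated relations `pᵢ² = uᵢ³ + a uᵢ + b`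
(`i = 1, 2`): solving this linear system for `(a, b)` gives
`a = (φ(u₁,p₁) - φ(u₂,p₂)) / (u₁ - u₂)` and `b = (u₁ φ(u₂,p₂) - u₂ φ(u₁,p₁)) / (u₁ - u₂)` with
`φ(u,p) = p² - u³`. For any two functions `φ₁(u₁,p₁)`, `φ₂(u₂,p₂)` the functions built this way
Poisson-commute: the brackets `{φᵢ, φᵢ}` vanish and the remaining terms cancel algebraically.
The bracket only involves derivatives at a point of the open set `{u₁ ≠ u₂}`, on which the given
formulas for `a` and `b` agree with the Stäckel ones.
-/

noncomputable def poissonBracket (f g : ℝ → ℝ → ℝ → ℝ → ℝ) (u₁ u₂ p₁ p₂ : ℝ) : ℝ :=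
    deriv (fun x => f x u₂ p₁ p₂) u₁ * deriv (fun y => g u₁ u₂ y p₂) p₁
  + deriv (fun x => f u₁ x p₁ p₂) u₂ * deriv (fun y => g u₁ u₂ p₁ y) p₂
  - deriv (fun y => f u₁ u₂ y p₂) p₁ * deriv (fun x => g x u₂ p₁ p₂) u₁
  - deriv (fun y => f u₁ u₂ p₁ y) p₂ * deriv (fun x => g u₁ x p₁ p₂) u₂

open Filter Topology in
theorem poissonBracket_congr {f f' g g' : ℝ → ℝ → ℝ → ℝ → ℝ} {u₁ u₂ p₁ p₂ : ℝ} (h : u₁ ≠ u₂)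
    (hf : ∀ x₁ x₂ y₁ y₂, x₁ ≠ x₂ → f x₁ x₂ y₁ y₂ = f' x₁ x₂ y₁ y₂)
    (hg : ∀ x₁ x₂ y₁ y₂, x₁ ≠ x₂ → g x₁ x₂ y₁ y₂ = g' x₁ x₂ y₁ y₂) :
    poissonBracket f g u₁ u₂ p₁ p₂ = poissonBracket f' g' u₁ u₂ p₁ p₂ := by
  have near₁ : ∀ᶠ x in 𝓝 u₁, x ≠ u₂ := eventually_ne_nhds h
  have near₂ : ∀ᶠ x in 𝓝 u₂, u₁ ≠ x := (eventually_ne_nhds h.symm).mono fun _ hx => Ne.symm hx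
  unfold poissonBracket
  rw [EventuallyEq.deriv_eq (near₁.mono fun x hx => hf x u₂ p₁ p₂ hx),
    EventuallyEq.deriv_eq (near₂.mono fun x hx => hf u₁ x p₁ p₂ hx),
    EventuallyEq.deriv_eq (near₁.mono fun x hx => hg x u₂ p₁ p₂ hx),
    EventuallyEq.deriv_eq (near₂.mono fun x hx => hg u₁ x p₁ p₂ hx)]
  simp only [hf _ _ _ _ h, hg _ _ _ _ h]

section Stackel

variable (φ₁ φ₂ : ℝ → ℝ → ℝ)

noncomputable def stackelA : ℝ → ℝ → ℝ → ℝ → ℝ :=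
  fun u₁ u₂ p₁ p₂ => (φ₁ u₁ p₁ - φ₂ u₂ p₂) / (u₁ - u₂)

noncomputable def stackelB : ℝ → ℝ → ℝ → ℝ → ℝ :=
  fun u₁ u₂ p₁ p₂ => (u₁ * φ₂ u₂ p₂ - u₂ * φ₁ u₁ p₁) / (u₁ - u₂)

theorem poissonBracket_stackelA_stackelB {u₁ u₂ p₁ p₂ : ℝ} (h : u₁ ≠ u₂)
    (h₁u : DifferentiableAt ℝ (φ₁ · p₁) u₁) (h₁p : DifferentiableAt ℝ (φ₁ u₁ ·) p₁)
    (h₂u : DifferentiableAt ℝ (φ₂ · p₂) u₂) (h₂p : DifferentiableAt ℝ (φ₂ u₂ ·) p₂) :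
    poissonBracket (stackelA φ₁ φ₂) (stackelB φ₁ φ₂) u₁ u₂ p₁ p₂ = 0 := by
  have hd : u₁ - u₂ ≠ 0 := sub_ne_zero.mpr h
  have hx₁ : HasDerivAt (fun x : ℝ => x - u₂) 1 u₁ := (hasDerivAt_id u₁).sub_const u₂
  have hx₂ : HasDerivAt (fun x : ℝ => u₁ - x) (-1) u₂ := (hasDerivAt_id u₂).const_sub u₁
  unfold poissonBracket stackelA stackelB
  rw [((h₁u.hasDerivAt.sub_const _).fun_div hx₁ hd).deriv,
    ((h₂u.hasDerivAt.const_sub _).fun_div hx₂ hd).deriv,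
    ((h₁p.hasDerivAt.sub_const _).div_const _).deriv,
    ((h₂p.hasDerivAt.const_sub _).div_const _).deriv,
    ((((hasDerivAt_id' u₁).mul_const _).fun_sub (h₁u.hasDerivAt.const_mul _)).fun_div hx₁ hd).deriv,
    (((h₂u.hasDerivAt.const_mul _).fun_sub ((hasDerivAt_id' u₂).mul_const _)).fun_div hx₂ hd).deriv,
    (((h₁p.hasDerivAt.const_mul _).const_sub _).div_const _).deriv,
    (((h₂p.hasDerivAt.const_mul _).sub_const _).div_const _).deriv]
  field_simp
  ring

end Stackel

/-- The integrals `a` and `b` of the Weierstrass separated relations are in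
involution with respect to the canonical Poisson bracket on `{u₁ ≠ u₂}`. -/
theorem a_b_in_involution (u₁ u₂ p₁ p₂ : ℝ) (h : u₁ ≠ u₂) :
    poissonBracket
      (fun x₁ x₂ y₁ y₂ => y₁ ^ 2 / (x₁ - x₂) + y₂ ^ 2 / (x₂ - x₁) - x₁ ^ 2 - x₁ * x₂ - x₂ ^ 2)
      (fun x₁ x₂ y₁ y₂ => x₂ * y₁ ^ 2 / (x₂ - x₁) + x₁ * y₂ ^ 2 / (x₁ - x₂) + (x₁ + x₂) * x₁ * x₂)
      u₁ u₂ p₁ p₂ = 0 := by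
  set φ : ℝ → ℝ → ℝ := fun u p => p ^ 2 - u ^ 3
  refine (poissonBracket_congr (f' := stackelA φ φ) (g' := stackelB φ φ) h ?_ ?_).trans
    (poissonBracket_stackelA_stackelB φ φ h (by fun_prop) (by fun_prop) (by fun_prop) (by fun_prop))
  all_goals
    intro x₁ x₂ y₁ y₂ hx
    have hd : x₁ - x₂ ≠ 0 := sub_ne_zero.mpr hx
    simp only [stackelA, stackelB, φ]
    field_simp
    ring
end

section
/- Let a = p₁²/(u₁−u₂) + p₂²/(u₂−u₁) − u₁² − u₁u₂ − u₂², and define x₃ = ((p₁−p₂)/(u₁−u₂))² − u₁ − u₂ and y₃ = p₁ + ((p₁−p₂)/(u₁−u₂))·(x₃ − u₁) on the open set {u₁ ≠ u₂} ⊂ ℝ⁴. Then {a, x₃} = 0 and {a, y₃} = 0 with respect to the canonical Poisson bracket; i.e. x₃ and y₃ are additional first integrals of the Hamiltonian system with Hamiltonian H = a. -/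
/-- Hamiltonian `a` of the separated Weierstrass system. -/
noncomputable def aFun (x₁ x₂ y₁ y₂ : ℝ) : ℝ :=
  y₁ ^ 2 / (x₁ - x₂) + y₂ ^ 2 / (x₂ - x₁) - x₁ ^ 2 - x₁ * x₂ - x₂ ^ 2

/-- Abscissa of the third intersection point of the chord with the cubic. -/
noncomputable def x₃Fun (x₁ x₂ y₁ y₂ : ℝ) : ℝ :=
  ((y₁ - y₂) / (x₁ - x₂)) ^ 2 - x₁ - x₂

/-- Ordinate of the third intersection point of the chord with the cubic. -/
noncomputable def y₃Fun (x₁ x₂ y₁ y₂ : ℝ) : ℝ :=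
  y₁ + ((y₁ - y₂) / (x₁ - x₂)) * (x₃Fun x₁ x₂ y₁ y₂ - x₁)

/-!
The bracket `{a, ·}` is a derivation. The chord slope `s = (p₁ - p₂)/(u₁ - u₂)` satisfies
`{a, s} = -1`, while `{a, u₁} + {a, u₂} = -(∂a/∂p₁ + ∂a/∂p₂) = -2s`. Hence
`{a, x₃} = {a, s² - u₁ - u₂} = -2s + 2s = 0`, and then
`{a, y₃} = {a, p₁} + {a, s}(x₃ - u₁) - s{a, u₁} = ∂a/∂u₁ - (x₃ - u₁) + s ∂a/∂p₁`,
which vanishes identically.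
-/

structure HasPartialDerivsAt (g : ℝ → ℝ → ℝ → ℝ → ℝ) (g₁ g₂ g₃ g₄ u₁ u₂ p₁ p₂ : ℝ) : Prop where
  du₁ : HasDerivAt (fun x => g x u₂ p₁ p₂) g₁ u₁
  du₂ : HasDerivAt (fun x => g u₁ x p₁ p₂) g₂ u₂
  dp₁ : HasDerivAt (fun y => g u₁ u₂ y p₂) g₃ p₁
  dp₂ : HasDerivAt (fun y => g u₁ u₂ p₁ y) g₄ p₂

namespace HasPartialDerivsAt

variable {f g k : ℝ → ℝ → ℝ → ℝ → ℝ} {f₁ f₂ f₃ f₄ g₁ g₂ g₃ g₄ k₁ k₂ k₃ k₄ u₁ u₂ p₁ p₂ : ℝ}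

theorem add (hg : HasPartialDerivsAt g g₁ g₂ g₃ g₄ u₁ u₂ p₁ p₂)
    (hk : HasPartialDerivsAt k k₁ k₂ k₃ k₄ u₁ u₂ p₁ p₂) :
    HasPartialDerivsAt (fun a b c d => g a b c d + k a b c d)
      (g₁ + k₁) (g₂ + k₂) (g₃ + k₃) (g₄ + k₄) u₁ u₂ p₁ p₂ :=
  ⟨hg.du₁.add hk.du₁, hg.du₂.add hk.du₂, hg.dp₁.add hk.dp₁, hg.dp₂.add hk.dp₂⟩

theorem sub (hg : HasPartialDerivsAt g g₁ g₂ g₃ g₄ u₁ u₂ p₁ p₂)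
    (hk : HasPartialDerivsAt k k₁ k₂ k₃ k₄ u₁ u₂ p₁ p₂) :
    HasPartialDerivsAt (fun a b c d => g a b c d - k a b c d)
      (g₁ - k₁) (g₂ - k₂) (g₃ - k₃) (g₄ - k₄) u₁ u₂ p₁ p₂ :=
  ⟨hg.du₁.sub hk.du₁, hg.du₂.sub hk.du₂, hg.dp₁.sub hk.dp₁, hg.dp₂.sub hk.dp₂⟩

theorem mul (hg : HasPartialDerivsAt g g₁ g₂ g₃ g₄ u₁ u₂ p₁ p₂)
    (hk : HasPartialDerivsAt k k₁ k₂ k₃ k₄ u₁ u₂ p₁ p₂) :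
    HasPartialDerivsAt (fun a b c d => g a b c d * k a b c d)
      (g₁ * k u₁ u₂ p₁ p₂ + g u₁ u₂ p₁ p₂ * k₁) (g₂ * k u₁ u₂ p₁ p₂ + g u₁ u₂ p₁ p₂ * k₂)
      (g₃ * k u₁ u₂ p₁ p₂ + g u₁ u₂ p₁ p₂ * k₃) (g₄ * k u₁ u₂ p₁ p₂ + g u₁ u₂ p₁ p₂ * k₄)
      u₁ u₂ p₁ p₂ :=
  ⟨hg.du₁.mul hk.du₁, hg.du₂.mul hk.du₂, hg.dp₁.mul hk.dp₁, hg.dp₂.mul hk.dp₂⟩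

theorem pow (hg : HasPartialDerivsAt g g₁ g₂ g₃ g₄ u₁ u₂ p₁ p₂) (n : ℕ) :
    HasPartialDerivsAt (fun a b c d => g a b c d ^ n)
      (n * g u₁ u₂ p₁ p₂ ^ (n - 1) * g₁) (n * g u₁ u₂ p₁ p₂ ^ (n - 1) * g₂)
      (n * g u₁ u₂ p₁ p₂ ^ (n - 1) * g₃) (n * g u₁ u₂ p₁ p₂ ^ (n - 1) * g₄) u₁ u₂ p₁ p₂ :=
  ⟨hg.du₁.fun_pow n, hg.du₂.fun_pow n, hg.dp₁.fun_pow n, hg.dp₂.fun_pow n⟩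

theorem div (hg : HasPartialDerivsAt g g₁ g₂ g₃ g₄ u₁ u₂ p₁ p₂)
    (hk : HasPartialDerivsAt k k₁ k₂ k₃ k₄ u₁ u₂ p₁ p₂) (h : k u₁ u₂ p₁ p₂ ≠ 0) :
    HasPartialDerivsAt (fun a b c d => g a b c d / k a b c d)
      ((g₁ * k u₁ u₂ p₁ p₂ - g u₁ u₂ p₁ p₂ * k₁) / k u₁ u₂ p₁ p₂ ^ 2)
      ((g₂ * k u₁ u₂ p₁ p₂ - g u₁ u₂ p₁ p₂ * k₂) / k u₁ u₂ p₁ p₂ ^ 2)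
      ((g₃ * k u₁ u₂ p₁ p₂ - g u₁ u₂ p₁ p₂ * k₃) / k u₁ u₂ p₁ p₂ ^ 2)
      ((g₄ * k u₁ u₂ p₁ p₂ - g u₁ u₂ p₁ p₂ * k₄) / k u₁ u₂ p₁ p₂ ^ 2) u₁ u₂ p₁ p₂ :=
  ⟨hg.du₁.fun_div hk.du₁ h, hg.du₂.fun_div hk.du₂ h, hg.dp₁.fun_div hk.dp₁ h,
    hg.dp₂.fun_div hk.dp₂ h⟩

theorem u₁_coord : HasPartialDerivsAt (fun a _ _ _ => a) 1 0 0 0 u₁ u₂ p₁ p₂ :=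
  ⟨hasDerivAt_id _, hasDerivAt_const _ _, hasDerivAt_const _ _, hasDerivAt_const _ _⟩

theorem u₂_coord : HasPartialDerivsAt (fun _ b _ _ => b) 0 1 0 0 u₁ u₂ p₁ p₂ :=
  ⟨hasDerivAt_const _ _, hasDerivAt_id _, hasDerivAt_const _ _, hasDerivAt_const _ _⟩

theorem p₁_coord : HasPartialDerivsAt (fun _ _ c _ => c) 0 0 1 0 u₁ u₂ p₁ p₂ :=
  ⟨hasDerivAt_const _ _, hasDerivAt_const _ _, hasDerivAt_id _, hasDerivAt_const _ _⟩

theorem p₂_coord : HasPartialDerivsAt (fun _ _ _ d => d) 0 0 0 1 u₁ u₂ p₁ p₂ :=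
  ⟨hasDerivAt_const _ _, hasDerivAt_const _ _, hasDerivAt_const _ _, hasDerivAt_id _⟩

theorem poissonBracket_eq (hf : HasPartialDerivsAt f f₁ f₂ f₃ f₄ u₁ u₂ p₁ p₂)
    (hg : HasPartialDerivsAt g g₁ g₂ g₃ g₄ u₁ u₂ p₁ p₂) :
    poissonBracket f g u₁ u₂ p₁ p₂ = f₁ * g₃ + f₂ * g₄ - f₃ * g₁ - f₄ * g₂ := by
  rw [poissonBracket, hf.du₁.deriv, hf.du₂.deriv, hf.dp₁.deriv, hf.dp₂.deriv,
    hg.du₁.deriv, hg.du₂.deriv, hg.dp₁.deriv, hg.dp₂.deriv]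

section Leibniz

variable (hf : HasPartialDerivsAt f f₁ f₂ f₃ f₄ u₁ u₂ p₁ p₂)
  (hg : HasPartialDerivsAt g g₁ g₂ g₃ g₄ u₁ u₂ p₁ p₂)
  (hk : HasPartialDerivsAt k k₁ k₂ k₃ k₄ u₁ u₂ p₁ p₂)
include hf hg hk

theorem poissonBracket_add :
    poissonBracket f (fun a b c d => g a b c d + k a b c d) u₁ u₂ p₁ p₂
      = poissonBracket f g u₁ u₂ p₁ p₂ + poissonBracket f k u₁ u₂ p₁ p₂ := by
  rw [hf.poissonBracket_eq (hg.add hk), hf.poissonBracket_eq hg, hf.poissonBracket_eq hk]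
  ring

theorem poissonBracket_sub :
    poissonBracket f (fun a b c d => g a b c d - k a b c d) u₁ u₂ p₁ p₂
      = poissonBracket f g u₁ u₂ p₁ p₂ - poissonBracket f k u₁ u₂ p₁ p₂ := by
  rw [hf.poissonBracket_eq (hg.sub hk), hf.poissonBracket_eq hg, hf.poissonBracket_eq hk]
  ring

theorem poissonBracket_mul :
    poissonBracket f (fun a b c d => g a b c d * k a b c d) u₁ u₂ p₁ p₂
      = poissonBracket f g u₁ u₂ p₁ p₂ * k u₁ u₂ p₁ p₂
        + g u₁ u₂ p₁ p₂ * poissonBracket f k u₁ u₂ p₁ p₂ := by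
  rw [hf.poissonBracket_eq (hg.mul hk), hf.poissonBracket_eq hg, hf.poissonBracket_eq hk]
  ring

end Leibniz

theorem poissonBracket_pow (hf : HasPartialDerivsAt f f₁ f₂ f₃ f₄ u₁ u₂ p₁ p₂)
    (hg : HasPartialDerivsAt g g₁ g₂ g₃ g₄ u₁ u₂ p₁ p₂) (n : ℕ) :
    poissonBracket f (fun a b c d => g a b c d ^ n) u₁ u₂ p₁ p₂
      = n * g u₁ u₂ p₁ p₂ ^ (n - 1) * poissonBracket f g u₁ u₂ p₁ p₂ := by
  rw [hf.poissonBracket_eq (hg.pow n), hf.poissonBracket_eq hg]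
  ring

theorem poissonBracket_u₁_coord (hf : HasPartialDerivsAt f f₁ f₂ f₃ f₄ u₁ u₂ p₁ p₂) :
    poissonBracket f (fun a _ _ _ => a) u₁ u₂ p₁ p₂ = -f₃ := by
  rw [hf.poissonBracket_eq u₁_coord]
  ring

theorem poissonBracket_u₂_coord (hf : HasPartialDerivsAt f f₁ f₂ f₃ f₄ u₁ u₂ p₁ p₂) :
    poissonBracket f (fun _ b _ _ => b) u₁ u₂ p₁ p₂ = -f₄ := by
  rw [hf.poissonBracket_eq u₂_coord]
  ring

theorem poissonBracket_p₁_coord (hf : HasPartialDerivsAt f f₁ f₂ f₃ f₄ u₁ u₂ p₁ p₂) :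
    poissonBracket f (fun _ _ c _ => c) u₁ u₂ p₁ p₂ = f₁ := by
  rw [hf.poissonBracket_eq p₁_coord]
  ring

end HasPartialDerivsAt

variable {u₁ u₂ p₁ p₂ : ℝ}

open HasPartialDerivsAt

theorem hasPartialDerivsAt_aFun (h : u₁ ≠ u₂) :
    HasPartialDerivsAt aFun ((p₂ ^ 2 - p₁ ^ 2) / (u₁ - u₂) ^ 2 - 2 * u₁ - u₂)
      ((p₁ ^ 2 - p₂ ^ 2) / (u₁ - u₂) ^ 2 - u₁ - 2 * u₂) (2 * p₁ / (u₁ - u₂))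
      (-(2 * p₂) / (u₁ - u₂)) u₁ u₂ p₁ p₂ := by
  have h₁ : u₁ - u₂ ≠ 0 := sub_ne_zero.2 h
  have h₂ : u₂ - u₁ ≠ 0 := sub_ne_zero.2 h.symm
  have ha : HasPartialDerivsAt aFun _ _ _ _ u₁ u₂ p₁ p₂ :=
    ((((p₁_coord.pow 2).div (u₁_coord.sub u₂_coord) h₁).add
      ((p₂_coord.pow 2).div (u₂_coord.sub u₁_coord) h₂)).sub (u₁_coord.pow 2)).sub
      (u₁_coord.mul u₂_coord) |>.sub (u₂_coord.pow 2)
  convert ha using 1 <;> (field_simp; ring)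

noncomputable def chordSlope (u₁ u₂ p₁ p₂ : ℝ) : ℝ := (p₁ - p₂) / (u₁ - u₂)

theorem hasPartialDerivsAt_chordSlope (h : u₁ ≠ u₂) :
    HasPartialDerivsAt chordSlope (-(p₁ - p₂) / (u₁ - u₂) ^ 2) ((p₁ - p₂) / (u₁ - u₂) ^ 2)
      (1 / (u₁ - u₂)) (-1 / (u₁ - u₂)) u₁ u₂ p₁ p₂ := by
  have hs : HasPartialDerivsAt chordSlope _ _ _ _ u₁ u₂ p₁ p₂ :=
    (p₁_coord.sub p₂_coord).div (u₁_coord.sub u₂_coord) (sub_ne_zero.2 h)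
  convert hs using 1 <;> (field_simp; ring)

theorem poissonBracket_aFun_chordSlope (h : u₁ ≠ u₂) :
    poissonBracket aFun chordSlope u₁ u₂ p₁ p₂ = -1 := by
  rw [(hasPartialDerivsAt_aFun h).poissonBracket_eq (hasPartialDerivsAt_chordSlope h)]
  field_simp [sub_ne_zero.2 h]
  ring

/-- `x₃` and `y₃` are additional first integrals of the Hamiltonian system with
Hamiltonian `H = a`: both Poisson brackets with `a` vanish on `{u₁ ≠ u₂}`. -/
theorem x₃_y₃_first_integrals (u₁ u₂ p₁ p₂ : ℝ) (h : u₁ ≠ u₂) :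
    poissonBracket aFun x₃Fun u₁ u₂ p₁ p₂ = 0 ∧
    poissonBracket aFun y₃Fun u₁ u₂ p₁ p₂ = 0 := by
  have ha := hasPartialDerivsAt_aFun (p₁ := p₁) (p₂ := p₂) h
  have hs := hasPartialDerivsAt_chordSlope (p₁ := p₁) (p₂ := p₂) h
  have hx : HasPartialDerivsAt x₃Fun _ _ _ _ u₁ u₂ p₁ p₂ := ((hs.pow 2).sub u₁_coord).sub u₂_coord
  have hx₃ : poissonBracket aFun x₃Fun u₁ u₂ p₁ p₂ = 0 := by
    change poissonBracket aFun (fun a b c d => chordSlope a b c d ^ 2 - a - b) u₁ u₂ p₁ p₂ = 0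
    rw [ha.poissonBracket_sub ((hs.pow 2).sub u₁_coord) u₂_coord,
      ha.poissonBracket_sub (hs.pow 2) u₁_coord, ha.poissonBracket_pow hs,
      poissonBracket_aFun_chordSlope h, ha.poissonBracket_u₁_coord, ha.poissonBracket_u₂_coord,
      chordSlope]
    ring
  refine ⟨hx₃, ?_⟩
  change poissonBracket aFun (fun a b c d => c + chordSlope a b c d * (x₃Fun a b c d - a))
    u₁ u₂ p₁ p₂ = 0
  rw [ha.poissonBracket_add p₁_coord (hs.mul (hx.sub u₁_coord)),
    ha.poissonBracket_mul hs (hx.sub u₁_coord), ha.poissonBracket_sub hx u₁_coord, hx₃,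
    poissonBracket_aFun_chordSlope h, ha.poissonBracket_p₁_coord, ha.poissonBracket_u₁_coord,
    chordSlope, x₃Fun]
  field_simp
  ring
end

section
/- On the open set {u₁ ≠ u₂} ⊂ ℝ⁴ define b = u₂·p₁²/(u₂−u₁) + u₁·p₂²/(u₁−u₂) + (u₁+u₂)·u₁·u₂, a = p₁²/(u₁−u₂) + p₂²/(u₂−u₁) − u₁² − u₁u₂ − u₂², x₃ = ((p₁−p₂)/(u₁−u₂))² − u₁ − u₂ and y₃ = p₁ + ((p₁−p₂)/(u₁−u₂))·(x₃ − u₁). Then with respect to the canonical Poisson bracket, {b, x₃} = 2·y₃ and {b, y₃} = 3·x₃² + a. -/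
/-- Integral of motion `b`. -/
noncomputable def bFun (x₁ x₂ y₁ y₂ : ℝ) : ℝ :=
  x₂ * y₁ ^ 2 / (x₂ - x₁) + x₁ * y₂ ^ 2 / (x₁ - x₂) + (x₁ + x₂) * x₁ * x₂

set_option maxHeartbeats 4000000 in
/-- Part of the algebra of first integrals: `{b,x₃} = 2·y₃` and
`{b,y₃} = 3·x₃² + a` on the open set `{u₁ ≠ u₂}`. -/
theorem b_brackets (u₁ u₂ p₁ p₂ : ℝ) (h : u₁ ≠ u₂) :
    poissonBracket bFun x₃Fun u₁ u₂ p₁ p₂ = 2 * y₃Fun u₁ u₂ p₁ p₂ ∧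
    poissonBracket bFun y₃Fun u₁ u₂ p₁ p₂ =
      3 * (x₃Fun u₁ u₂ p₁ p₂) ^ 2 + aFun u₁ u₂ p₁ p₂ := by
  have h2 : u₁ - u₂ ≠ 0 := sub_ne_zero.mpr h
  have h1 : u₂ - u₁ ≠ 0 := sub_ne_zero.mpr (Ne.symm h)
  have Hb1 : HasDerivAt (fun x => bFun x u₂ p₁ p₂)
      ((0 * (u₂ - u₁) - u₂ * p₁ ^ 2 * (-1)) / (u₂ - u₁) ^ 2 +
        (1 * p₂ ^ 2 * (u₁ - u₂) - u₁ * p₂ ^ 2 * 1) / (u₁ - u₂) ^ 2 +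
        (1 * u₁ + (u₁ + u₂) * 1) * u₂) u₁ :=
    (((hasDerivAt_const u₁ (u₂*p₁^2)).div ((hasDerivAt_id u₁).const_sub u₂) h1).add
      ((((hasDerivAt_id u₁).mul_const (p₂^2)).div ((hasDerivAt_id u₁).sub_const u₂) h2))).add
      ((((hasDerivAt_id u₁).add_const u₂).mul (hasDerivAt_id u₁)).mul_const u₂)
  have Hb2 : HasDerivAt (fun x => bFun u₁ x p₁ p₂)
      ((1 * p₁ ^ 2 * (u₂ - u₁) - u₂ * p₁ ^ 2 * 1) / (u₂ - u₁) ^ 2 +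
        (0 * (u₁ - u₂) - u₁ * p₂ ^ 2 * (-1)) / (u₁ - u₂) ^ 2 +
        (1 * u₁ * u₂ + (u₁ + u₂) * u₁ * 1)) u₂ :=
    ((((hasDerivAt_id u₂).mul_const (p₁^2)).div ((hasDerivAt_id u₂).sub_const u₁) h1).add
      ((hasDerivAt_const u₂ (u₁*p₂^2)).div ((hasDerivAt_id u₂).const_sub u₁) h2)).add
      ((((hasDerivAt_id u₂).const_add u₁).mul_const u₁).mul (hasDerivAt_id u₂))
  have Hb3 : HasDerivAt (fun y => bFun u₁ u₂ y p₂)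
      (u₂ * (((2:ℕ):ℝ) * p₁ ^ (2 - 1)) / (u₂ - u₁) + 0 + 0) p₁ :=
    ((((hasDerivAt_pow 2 p₁).const_mul u₂).div_const (u₂-u₁)).add
      (hasDerivAt_const p₁ (u₁*p₂^2/(u₁-u₂)))).add (hasDerivAt_const p₁ ((u₁+u₂)*u₁*u₂))
  have Hb4 : HasDerivAt (fun y => bFun u₁ u₂ p₁ y)
      (0 + u₁ * (((2:ℕ):ℝ) * p₂ ^ (2 - 1)) / (u₁ - u₂) + 0) p₂ :=
    ((hasDerivAt_const p₂ (u₂*p₁^2/(u₂-u₁))).add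
      (((hasDerivAt_pow 2 p₂).const_mul u₁).div_const (u₁-u₂))).add
      (hasDerivAt_const p₂ ((u₁+u₂)*u₁*u₂))
  have Hx1 : HasDerivAt (fun x => x₃Fun x u₂ p₁ p₂)
      (((2:ℕ):ℝ) * ((p₁ - p₂) / (u₁ - u₂)) ^ (2 - 1) *
        ((0 * (u₁ - u₂) - (p₁ - p₂) * 1) / (u₁ - u₂) ^ 2) - 1) u₁ :=
    ((((hasDerivAt_const u₁ (p₁-p₂)).div ((hasDerivAt_id u₁).sub_const u₂) h2).pow 2).sub
      (hasDerivAt_id u₁)).sub_const u₂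
  have Hx2 : HasDerivAt (fun x => x₃Fun u₁ x p₁ p₂)
      (((2:ℕ):ℝ) * ((p₁ - p₂) / (u₁ - u₂)) ^ (2 - 1) *
        ((0 * (u₁ - u₂) - (p₁ - p₂) * (-1)) / (u₁ - u₂) ^ 2) - 1) u₂ :=
    ((((hasDerivAt_const u₂ (p₁-p₂)).div ((hasDerivAt_id u₂).const_sub u₁) h2).pow 2).sub_const u₁).sub
      (hasDerivAt_id u₂)
  have Hx3 : HasDerivAt (fun y => x₃Fun u₁ u₂ y p₂)
      (((2:ℕ):ℝ) * ((p₁ - p₂) / (u₁ - u₂)) ^ (2 - 1) * (1 / (u₁ - u₂))) p₁ :=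
    (((((hasDerivAt_id p₁).sub_const p₂).div_const (u₁-u₂)).pow 2).sub_const u₁).sub_const u₂
  have Hx4 : HasDerivAt (fun y => x₃Fun u₁ u₂ p₁ y)
      (((2:ℕ):ℝ) * ((p₁ - p₂) / (u₁ - u₂)) ^ (2 - 1) * (-1 / (u₁ - u₂))) p₂ :=
    (((((hasDerivAt_id p₂).const_sub p₁).div_const (u₁-u₂)).pow 2).sub_const u₁).sub_const u₂
  have Q1 := (hasDerivAt_const u₁ (p₁-p₂)).div ((hasDerivAt_id u₁).sub_const u₂) h2
  have Hy1 : HasDerivAt (fun x => y₃Fun x u₂ p₁ p₂)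
      ((0 * (u₁ - u₂) - (p₁ - p₂) * 1) / (u₁ - u₂) ^ 2 *
          (((p₁ - p₂) / (u₁ - u₂)) ^ 2 - u₁ - u₂ - u₁) +
        (p₁ - p₂) / (u₁ - u₂) *
          (((2:ℕ):ℝ) * ((p₁ - p₂) / (u₁ - u₂)) ^ (2 - 1) *
            ((0 * (u₁ - u₂) - (p₁ - p₂) * 1) / (u₁ - u₂) ^ 2) - 1 - 1)) u₁ :=
    (Q1.mul ((((Q1.pow 2).sub (hasDerivAt_id u₁)).sub_const u₂).sub (hasDerivAt_id u₁))).const_add p₁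
  have Q2 := (hasDerivAt_const u₂ (p₁-p₂)).div ((hasDerivAt_id u₂).const_sub u₁) h2
  have Hy2 : HasDerivAt (fun x => y₃Fun u₁ x p₁ p₂)
      ((0 * (u₁ - u₂) - (p₁ - p₂) * (-1)) / (u₁ - u₂) ^ 2 *
          (((p₁ - p₂) / (u₁ - u₂)) ^ 2 - u₁ - u₂ - u₁) +
        (p₁ - p₂) / (u₁ - u₂) *
          (((2:ℕ):ℝ) * ((p₁ - p₂) / (u₁ - u₂)) ^ (2 - 1) *
            ((0 * (u₁ - u₂) - (p₁ - p₂) * (-1)) / (u₁ - u₂) ^ 2) - 1)) u₂ :=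
    (Q2.mul ((((Q2.pow 2).sub_const u₁).sub (hasDerivAt_id u₂)).sub_const u₁)).const_add p₁
  have R : HasDerivAt (fun y : ℝ => (y - p₂) / (u₁ - u₂)) (1 / (u₁-u₂)) p₁ :=
    ((hasDerivAt_id p₁).sub_const p₂).div_const (u₁-u₂)
  have Hy3 : HasDerivAt (fun y => y₃Fun u₁ u₂ y p₂)
      (1 + (1 / (u₁ - u₂) * (((p₁ - p₂) / (u₁ - u₂)) ^ 2 - u₁ - u₂ - u₁) +
        (p₁ - p₂) / (u₁ - u₂) *
          (((2:ℕ):ℝ) * ((p₁ - p₂) / (u₁ - u₂)) ^ (2 - 1) * (1 / (u₁ - u₂))))) p₁ :=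
    (hasDerivAt_id p₁).add (R.mul ((((R.pow 2).sub_const u₁).sub_const u₂).sub_const u₁))
  have S : HasDerivAt (fun y : ℝ => (p₁ - y) / (u₁ - u₂)) (-1 / (u₁-u₂)) p₂ :=
    ((hasDerivAt_id p₂).const_sub p₁).div_const (u₁-u₂)
  have Hy4 : HasDerivAt (fun y => y₃Fun u₁ u₂ p₁ y)
      (-1 / (u₁ - u₂) * (((p₁ - p₂) / (u₁ - u₂)) ^ 2 - u₁ - u₂ - u₁) +
        (p₁ - p₂) / (u₁ - u₂) *
          (((2:ℕ):ℝ) * ((p₁ - p₂) / (u₁ - u₂)) ^ (2 - 1) * (-1 / (u₁ - u₂)))) p₂ :=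
    (S.mul ((((S.pow 2).sub_const u₁).sub_const u₂).sub_const u₁)).const_add p₁
  constructor
  · unfold poissonBracket
    rw [Hb1.deriv, Hb2.deriv, Hb3.deriv, Hb4.deriv, Hx1.deriv, Hx2.deriv, Hx3.deriv, Hx4.deriv]
    unfold y₃Fun x₃Fun
    push_cast
    field_simp
    ring
  · unfold poissonBracket
    rw [Hb1.deriv, Hb2.deriv, Hb3.deriv, Hb4.deriv, Hy1.deriv, Hy2.deriv, Hy3.deriv, Hy4.deriv]
    unfold x₃Fun aFun
    push_cast
    field_simp
    ring
end

section
/- Let q₁, q₂, p₁, p₂ ∈ ℝ with q₂ > 0, and set u₁ = q₁ − √q₂, u₂ = q₁ + √q₂, π₁ = p₁/2 + (u₁−u₂)p₂/2, π₂ = p₁/2 − (u₁−u₂)p₂/2. Then under this substitution the four functions a = π₁²/(u₁−u₂) + π₂²/(u₂−u₁) − u₁² − u₁u₂ − u₂², b = u₂π₁²/(u₂−u₁) + u₁π₂²/(u₁−u₂) + (u₁+u₂)u₁u₂, x₃ = ((π₁−π₂)/(u₁−u₂))² − u₁ − u₂, y₃ = π₁ + ((π₁−π₂)/(u₁−u₂))·(x₃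 − u₁) take the values a = p₁p₂ − 3q₁² − q₂, b = p₁²/4 − q₁p₁p₂ + q₂p₂² + 2q₁(q₁² − q₂), x₃ = p₂² − 2q₁, and y₃ = p₁/2 + p₂³ − 3p₂q₁. -/
theorem canonical_aux (q₁ p₁ p₂ s : ℝ) (hs : s ≠ 0) :
    let u₁ := q₁ - s
    let u₂ := q₁ + s
    let π₁ := p₁ / 2 + (u₁ - u₂) * p₂ / 2
    let π₂ := p₁ / 2 - (u₁ - u₂) * p₂ / 2
    π₁ ^ 2 / (u₁ - u₂) + π₂ ^ 2 / (u₂ - u₁) - u₁ ^ 2 - u₁ * u₂ - u₂ ^ 2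
      = p₁ * p₂ - 3 * q₁ ^ 2 - s ^ 2 ∧
    u₂ * π₁ ^ 2 / (u₂ - u₁) + u₁ * π₂ ^ 2 / (u₁ - u₂) + (u₁ + u₂) * u₁ * u₂
      = p₁ ^ 2 / 4 - q₁ * p₁ * p₂ + s ^ 2 * p₂ ^ 2 + 2 * q₁ * (q₁ ^ 2 - s ^ 2) ∧
    ((π₁ - π₂) / (u₁ - u₂)) ^ 2 - u₁ - u₂ = p₂ ^ 2 - 2 * q₁ ∧
    π₁ + ((π₁ - π₂) / (u₁ - u₂)) *
      ((((π₁ - π₂) / (u₁ - u₂)) ^ 2 - u₁ - u₂) - u₁) = p₁ / 2 + p₂ ^ 3 - 3 * p₂ * q₁ := by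
  intro u₁ u₂ π₁ π₂
  have h : u₁ - u₂ = -(2 * s) := by simp only [u₁, u₂]; ring
  have h' : u₂ - u₁ = 2 * s := by simp only [u₁, u₂]; ring
  simp only [π₁, π₂, u₁, u₂, h, h']
  have h2 : (2 : ℝ) * s ≠ 0 := by exact mul_ne_zero two_ne_zero hs
  refine ⟨?_, ?_, ?_, ?_⟩ <;> field_simp [hs] <;> ring

/-- Under the canonical transformation `u₁ = q₁ − √q₂`, `u₂ = q₁ + √q₂`,
`π₁ = p₁/2 + (u₁−u₂)p₂/2`, `π₂ = p₁/2 − (u₁−u₂)p₂/2` (for `q₂ > 0`) the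
integrals `a`, `b`, `x₃`, `y₃` take the polynomial form
`a = p₁p₂ − 3q₁² − q₂`, `b = p₁²/4 − q₁p₁p₂ + q₂p₂² + 2q₁(q₁² − q₂)`,
`x₃ = p₂² − 2q₁`, `y₃ = p₁/2 + p₂³ − 3p₂q₁`. -/
theorem canonical_transformation (q₁ q₂ p₁ p₂ : ℝ) (hq₂ : q₂ > 0) :
    let u₁ := q₁ - Real.sqrt q₂
    let u₂ := q₁ + Real.sqrt q₂
    let π₁ := p₁ / 2 + (u₁ - u₂) * p₂ / 2
    let π₂ := p₁ / 2 - (u₁ - u₂) * p₂ / 2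
    let a := π₁ ^ 2 / (u₁ - u₂) + π₂ ^ 2 / (u₂ - u₁) - u₁ ^ 2 - u₁ * u₂ - u₂ ^ 2
    let b := u₂ * π₁ ^ 2 / (u₂ - u₁) + u₁ * π₂ ^ 2 / (u₁ - u₂) + (u₁ + u₂) * u₁ * u₂
    let x₃ := ((π₁ - π₂) / (u₁ - u₂)) ^ 2 - u₁ - u₂
    let y₃ := π₁ + ((π₁ - π₂) / (u₁ - u₂)) * (x₃ - u₁)
    a = p₁ * p₂ - 3 * q₁ ^ 2 - q₂ ∧
    b = p₁ ^ 2 / 4 - q₁ * p₁ * p₂ + q₂ * p₂ ^ 2 + 2 * q₁ * (q₁ ^ 2 - q₂) ∧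
    x₃ = p₂ ^ 2 - 2 * q₁ ∧
    y₃ = p₁ / 2 + p₂ ^ 3 - 3 * p₂ * q₁ := by
  have hs2 : Real.sqrt q₂ ^ 2 = q₂ := Real.sq_sqrt hq₂.le
  have hsne : Real.sqrt q₂ ≠ 0 := ne_of_gt (Real.sqrt_pos.mpr hq₂)
  have := canonical_aux q₁ p₁ p₂ (Real.sqrt q₂) hsne
  rw [hs2] at this
  exact this
end

section
/- Let n, m be nonzero real numbers. On the open set {u₁ ≠ u₂} ⊂ ℝ⁴ define a = p₁²/(n²(u₁−u₂)) + p₂²/(m²(u₂−u₁)) − u₁² − u₁u₂ − u₂² and b = u₂·p₁²/(n²(u₂−u₁)) + u₁·p₂²/(m²(u₁−u₂)) + (u₁+u₂)·u₁·u₂. Then {a, b} = 0 identically with respect to the canonical Poisson bracket; i.e. a and b are in involution, and (a,b) solves the rescaled separated relations (p₁/n)² = u₁³ + a·u₁ + b, (p₂/m)² = u₂³ + a·u₂ + b. -/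
theorem deriv_eq_neg_mul_deriv_of_eventually_mul_add_eq {f g : ℝ → ℝ} {x k c : ℝ}
    (hfg : ∀ᶠ t in nhds x, k * f t + g t = c) : deriv g x = -k * deriv f x := by
  have hg : g =ᶠ[nhds x] fun t => c - k * f t :=
    hfg.mono fun t ht => by rw [← ht]; ring
  rw [hg.deriv_eq, deriv_const_sub, deriv_const_mul_field]
  ring

theorem poissonBracket_eq_zero_of_deriv_eq_mul {f g : ℝ → ℝ → ℝ → ℝ → ℝ} {u₁ u₂ p₁ p₂ : ℝ}
    (c₁ c₂ : ℝ)
    (hu₁ : deriv (fun x => g x u₂ p₁ p₂) u₁ = c₁ * deriv (fun x => f x u₂ p₁ p₂) u₁)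
    (hp₁ : deriv (fun y => g u₁ u₂ y p₂) p₁ = c₁ * deriv (fun y => f u₁ u₂ y p₂) p₁)
    (hu₂ : deriv (fun x => g u₁ x p₁ p₂) u₂ = c₂ * deriv (fun x => f u₁ x p₁ p₂) u₂)
    (hp₂ : deriv (fun y => g u₁ u₂ p₁ y) p₂ = c₂ * deriv (fun y => f u₁ u₂ p₁ y) p₂) :
    poissonBracket f g u₁ u₂ p₁ p₂ = 0 := by
  rw [poissonBracket, hu₁, hp₁, hu₂, hp₂]
  ring

theorem poissonBracket_eq_zero_of_separated {f g : ℝ → ℝ → ℝ → ℝ → ℝ} {w₁ w₂ : ℝ → ℝ → ℝ}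
    (hw₁ : ∀ x₁ x₂ y₁ y₂, x₁ ≠ x₂ → x₁ * f x₁ x₂ y₁ y₂ + g x₁ x₂ y₁ y₂ = w₁ x₁ y₁)
    (hw₂ : ∀ x₁ x₂ y₁ y₂, x₁ ≠ x₂ → x₂ * f x₁ x₂ y₁ y₂ + g x₁ x₂ y₁ y₂ = w₂ x₂ y₂)
    {u₁ u₂ p₁ p₂ : ℝ} (h : u₁ ≠ u₂) : poissonBracket f g u₁ u₂ p₁ p₂ = 0 := by
  refine poissonBracket_eq_zero_of_deriv_eq_mul (-u₂) (-u₁) ?_ ?_ ?_ ?_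
  · exact deriv_eq_neg_mul_deriv_of_eventually_mul_add_eq <|
      (eventually_ne_nhds h).mono fun t ht => hw₂ t u₂ p₁ p₂ ht
  · exact deriv_eq_neg_mul_deriv_of_eventually_mul_add_eq <|
      .of_forall fun t => hw₂ u₁ u₂ t p₂ h
  · exact deriv_eq_neg_mul_deriv_of_eventually_mul_add_eq <|
      (eventually_ne_nhds h.symm).mono fun t ht => hw₁ u₁ t p₁ p₂ ht.symm
  · exact deriv_eq_neg_mul_deriv_of_eventually_mul_add_eq <|
      .of_forall fun t => hw₁ u₁ u₂ p₁ t h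

theorem rescaled_involution_general (n m : ℝ)
    (u₁ u₂ p₁ p₂ : ℝ) (h : u₁ ≠ u₂) :
    let aF : ℝ → ℝ → ℝ → ℝ → ℝ := fun x₁ x₂ y₁ y₂ =>
      y₁ ^ 2 / (n ^ 2 * (x₁ - x₂)) + y₂ ^ 2 / (m ^ 2 * (x₂ - x₁))
        - x₁ ^ 2 - x₁ * x₂ - x₂ ^ 2
    let bF : ℝ → ℝ → ℝ → ℝ → ℝ := fun x₁ x₂ y₁ y₂ =>
      x₂ * y₁ ^ 2 / (n ^ 2 * (x₂ - x₁)) + x₁ * y₂ ^ 2 / (m ^ 2 * (x₁ - x₂))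
        + (x₁ + x₂) * x₁ * x₂
    poissonBracket aF bF u₁ u₂ p₁ p₂ = 0 ∧
    (p₁ / n) ^ 2 = u₁ ^ 3 + aF u₁ u₂ p₁ p₂ * u₁ + bF u₁ u₂ p₁ p₂ ∧
    (p₂ / m) ^ 2 = u₂ ^ 3 + aF u₁ u₂ p₁ p₂ * u₂ + bF u₁ u₂ p₁ p₂ := by
  intro aF bF
  have hrel₁ : ∀ x₁ x₂ y₁ y₂, x₁ ≠ x₂ →
      x₁ * aF x₁ x₂ y₁ y₂ + bF x₁ x₂ y₁ y₂ = (y₁ / n) ^ 2 - x₁ ^ 3 := by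
    intro x₁ x₂ y₁ y₂ hx
    have hd : (x₁ - x₂) * (x₁ - x₂)⁻¹ = 1 := mul_inv_cancel₀ (sub_ne_zero.mpr hx)
    simp only [aF, bF, div_eq_mul_inv, mul_inv, mul_pow, ← neg_sub x₁ x₂, inv_neg]
    linear_combination y₁ ^ 2 * (n ^ 2)⁻¹ * hd
  have hrel₂ : ∀ x₁ x₂ y₁ y₂, x₁ ≠ x₂ →
      x₂ * aF x₁ x₂ y₁ y₂ + bF x₁ x₂ y₁ y₂ = (y₂ / m) ^ 2 - x₂ ^ 3 := by
    intro x₁ x₂ y₁ y₂ hx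
    have hd : (x₁ - x₂) * (x₁ - x₂)⁻¹ = 1 := mul_inv_cancel₀ (sub_ne_zero.mpr hx)
    simp only [aF, bF, div_eq_mul_inv, mul_inv, mul_pow, ← neg_sub x₁ x₂, inv_neg]
    linear_combination y₂ ^ 2 * (m ^ 2)⁻¹ * hd
  refine ⟨poissonBracket_eq_zero_of_separated hrel₁ hrel₂ h, ?_, ?_⟩
  · linear_combination -hrel₁ u₁ u₂ p₁ p₂ h
  · linear_combination -hrel₂ u₁ u₂ p₁ p₂ h

/-- For nonzero reals `n`, `m`, the rescaled integrals `a` and `b` are in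
involution with respect to the canonical Poisson bracket on `{u₁ ≠ u₂}`, and
they solve the rescaled separated relations `(p₁/n)² = u₁³ + a·u₁ + b`,
`(p₂/m)² = u₂³ + a·u₂ + b`. -/
theorem rescaled_involution (n m : ℝ) (hn : n ≠ 0) (hm : m ≠ 0)
    (u₁ u₂ p₁ p₂ : ℝ) (h : u₁ ≠ u₂) :
    let aF : ℝ → ℝ → ℝ → ℝ → ℝ := fun x₁ x₂ y₁ y₂ =>
      y₁ ^ 2 / (n ^ 2 * (x₁ - x₂)) + y₂ ^ 2 / (m ^ 2 * (x₂ - x₁))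
        - x₁ ^ 2 - x₁ * x₂ - x₂ ^ 2
    let bF : ℝ → ℝ → ℝ → ℝ → ℝ := fun x₁ x₂ y₁ y₂ =>
      x₂ * y₁ ^ 2 / (n ^ 2 * (x₂ - x₁)) + x₁ * y₂ ^ 2 / (m ^ 2 * (x₁ - x₂))
        + (x₁ + x₂) * x₁ * x₂
    poissonBracket aF bF u₁ u₂ p₁ p₂ = 0 ∧
    (p₁ / n) ^ 2 = u₁ ^ 3 + aF u₁ u₂ p₁ p₂ * u₁ + bF u₁ u₂ p₁ p₂ ∧
    (p₂ / m) ^ 2 = u₂ ^ 3 + aF u₁ u₂ p₁ p₂ * u₂ + bF u₁ u₂ p₁ p₂ :=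
  rescaled_involution_general n m u₁ u₂ p₁ p₂ h
end

section
/- Let u₁, u₂, p₁, p₂ ∈ ℝ with u₁ ≠ u₂, u₁ ≠ 0, u₂ ≠ 0 and p₁u₂ − p₂u₁ ≠ 0. Define a = p₁²/(u₁−u₂) + p₂²/(u₂−u₁) − u₁² − u₁u₂ − u₂², b = u₂p₁²/(u₂−u₁) + u₁p₂²/(u₁−u₂) + (u₁+u₂)u₁u₂, and the parabola coefficients b₁ = (p₁u₂ − p₂u₁)/(u₁u₂(u₁−u₂)), b₀ = −(p₁u₂² − p₂u₁²)/(u₁u₂(u₁−u₂)). Then the Abel polynomial factorizes identically as a polynomial in x: x³ + a·x + b − (x(b₁x + b₀))² = −b₁²·(x − u₁)(x − u₂)·(x² + S·x + P), where S = (u₁−u₂)(p₁²u₂² − p₂²u₁² − (u₁−u₂)u₁²u₂²)/(p₁u₂ − p₂u₁)² and P = u₁u₂(u₁−u₂)(p₁²u₂ − p₂²u₁ − u₁³u₂ + u₁u₂³)/(p₁u₂ − p₂u₁)². -/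
/-- Factorization of the Abel polynomial: the quartic
`x³ + a·x + b − (x(b₁x + b₀))²` vanishes at the abscissas `u₁`, `u₂` of the two
given intersection points, and the remaining quadratic factor `x² + S·x + P`
carries the abscissas of the other two movable intersection points of the
parabola `y = x(b₁x + b₀)` with the cubic. -/
theorem abel_polynomial_factorization (u₁ u₂ p₁ p₂ : ℝ)
    (h : u₁ ≠ u₂) (h₁ : u₁ ≠ 0) (h₂ : u₂ ≠ 0) (hD : p₁ * u₂ - p₂ * u₁ ≠ 0) :
    let a := p₁ ^ 2 / (u₁ - u₂) + p₂ ^ 2 / (u₂ - u₁) - u₁ ^ 2 - u₁ * u₂ - u₂ ^ 2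
    let b := u₂ * p₁ ^ 2 / (u₂ - u₁) + u₁ * p₂ ^ 2 / (u₁ - u₂) + (u₁ + u₂) * u₁ * u₂
    let b₁ := (p₁ * u₂ - p₂ * u₁) / (u₁ * u₂ * (u₁ - u₂))
    let b₀ := -(p₁ * u₂ ^ 2 - p₂ * u₁ ^ 2) / (u₁ * u₂ * (u₁ - u₂))
    let S := (u₁ - u₂) * (p₁ ^ 2 * u₂ ^ 2 - p₂ ^ 2 * u₁ ^ 2
      - (u₁ - u₂) * u₁ ^ 2 * u₂ ^ 2) / (p₁ * u₂ - p₂ * u₁) ^ 2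
    let P := u₁ * u₂ * (u₁ - u₂) * (p₁ ^ 2 * u₂ - p₂ ^ 2 * u₁
      - u₁ ^ 3 * u₂ + u₁ * u₂ ^ 3) / (p₁ * u₂ - p₂ * u₁) ^ 2
    ∀ x : ℝ, x ^ 3 + a * x + b - (x * (b₁ * x + b₀)) ^ 2 =
      -b₁ ^ 2 * (x - u₁) * (x - u₂) * (x ^ 2 + S * x + P) := by
  intro a b b₁ b₀ S P x
  have h₁₂ : u₁ - u₂ ≠ 0 := sub_ne_zero.mpr h
  -- `hD` in the normal form `field_simp` gives the denominator `(p₁ * u₂ - p₂ * u₁) ^ 2`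
  have hD' : p₁ * u₂ - u₁ * p₂ ≠ 0 := by rwa [mul_comm u₁ p₂]
  simp only [a, b, b₁, b₀, S, P]
  field_simp
  ring
end

section
/- Let u₁, u₂, p₁, p₂ ∈ ℝ with u₁ ≠ u₂, u₁ ≠ 0, u₂ ≠ 0 and p₁u₂ − p₂u₁ ≠ 0, and define b₁ = (p₁u₂ − p₂u₁)/(u₁u₂(u₁−u₂)), b₀ = −(p₁u₂² − p₂u₁²)/(u₁u₂(u₁−u₂)). Let v₁, v₂ be the two roots of x² + S·x + P = 0 with S = (u₁−u₂)(p₁²u₂² − p₂²u₁² − (u₁−u₂)u₁²u₂²)/(p₁u₂ − p₂u₁)² and P = u₁u₂(u₁−u₂)(p₁²u₂ − p₂²u₁ − u₁³u₂ + u₁u₂³)/(p₁u₂ − p₂u₁)², and assume v₁ ≠ v₂. Set π_j = −v_j(b₁v_j + b₀) for j = 1, 2. Then the map ρ : (u₁,u₂,p₁,p₂) ↦ (v₁,v₂,π₁,π₂) preserves the form of the integrals of motion: a(v₁,v₂,π₁,π₂) = a(u₁,u₂,p₁,p₂) and b(v₁,v₂,π₁,π₂) = b(u₁,u₂,p₁,p₂),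 where a(x₁,x₂,y₁,y₂) = y₁²/(x₁−x₂) + y₂²/(x₂−x₁) − x₁² − x₁x₂ − x₂² and b(x₁,x₂,y₁,y₂) = x₂y₁²/(x₂−x₁) + x₁y₂²/(x₁−x₂) + (x₁+x₂)x₁x₂. -/
/-!
The parabola `y = x (b₁ x + b₀)` passes through `(u₁, p₁)` and `(u₂, p₂)`, which lie on the cubic
`y² = x³ + a x + b` with `a = aFun u₁ u₂ p₁ p₂` and `b = bFun u₁ u₂ p₁ p₂`. Hence the quartic
`(x (b₁ x + b₀))² - (x³ + a x + b)` vanishes at `u₁` and `u₂`, and its residual quadratic factor is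
`b₁² (x² + S x + P)`. So the points `(vⱼ, πⱼ)` lie on the same cubic, and two points of a cubic
`y² = x³ + a x + b` with distinct abscissas determine `a` and `b` through `aFun` and `bFun`.
-/

theorem aFun_eq_and_bFun_eq_of_onCurve {a b x₁ x₂ y₁ y₂ : ℝ} (hx : x₁ ≠ x₂)
    (h₁ : y₁ ^ 2 = x₁ ^ 3 + a * x₁ + b) (h₂ : y₂ ^ 2 = x₂ ^ 3 + a * x₂ + b) :
    aFun x₁ x₂ y₁ y₂ = a ∧ bFun x₁ x₂ y₁ y₂ = b := by
  have hx₁₂ : x₁ - x₂ ≠ 0 := sub_ne_zero.mpr hx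
  have hx₂₁ : x₂ - x₁ ≠ 0 := sub_ne_zero.mpr hx.symm
  unfold aFun bFun
  rw [h₁, h₂]
  constructor <;> field_simp <;> ring

section Parabola

variable (u₁ u₂ p₁ p₂ : ℝ)

noncomputable def parabolaB₁ : ℝ := (p₁ * u₂ - p₂ * u₁) / (u₁ * u₂ * (u₁ - u₂))

noncomputable def parabolaB₀ : ℝ := -(p₁ * u₂ ^ 2 - p₂ * u₁ ^ 2) / (u₁ * u₂ * (u₁ - u₂))

noncomputable def residualS : ℝ :=
  (u₁ - u₂) * (p₁ ^ 2 * u₂ ^ 2 - p₂ ^ 2 * u₁ ^ 2 - (u₁ - u₂) * u₁ ^ 2 * u₂ ^ 2)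
    / (p₁ * u₂ - p₂ * u₁) ^ 2

noncomputable def residualP : ℝ :=
  u₁ * u₂ * (u₁ - u₂) * (p₁ ^ 2 * u₂ - p₂ ^ 2 * u₁ - u₁ ^ 3 * u₂ + u₁ * u₂ ^ 3)
    / (p₁ * u₂ - p₂ * u₁) ^ 2

variable {u₁ u₂ p₁ p₂}

theorem parabola_sq_sub_cubic_eq (h : u₁ ≠ u₂) (h₁ : u₁ ≠ 0) (h₂ : u₂ ≠ 0)
    (hD : p₁ * u₂ - p₂ * u₁ ≠ 0) (x : ℝ) :
    (x * (parabolaB₁ u₁ u₂ p₁ p₂ * x + parabolaB₀ u₁ u₂ p₁ p₂)) ^ 2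
        - (x ^ 3 + aFun u₁ u₂ p₁ p₂ * x + bFun u₁ u₂ p₁ p₂)
      = parabolaB₁ u₁ u₂ p₁ p₂ ^ 2 * (x - u₁) * (x - u₂)
          * (x ^ 2 + residualS u₁ u₂ p₁ p₂ * x + residualP u₁ u₂ p₁ p₂) := by
  have h₁₂ : u₁ - u₂ ≠ 0 := sub_ne_zero.mpr h
  have h₂₁ : u₂ - u₁ ≠ 0 := sub_ne_zero.mpr h.symm
  unfold parabolaB₁ parabolaB₀ residualS residualP aFun bFun
  field_simp
  ring

theorem parabola_sq_eq_cubic_of_residual_root (h : u₁ ≠ u₂) (h₁ : u₁ ≠ 0) (h₂ : u₂ ≠ 0)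
    (hD : p₁ * u₂ - p₂ * u₁ ≠ 0) {v : ℝ}
    (hv : v ^ 2 + residualS u₁ u₂ p₁ p₂ * v + residualP u₁ u₂ p₁ p₂ = 0) :
    (-v * (parabolaB₁ u₁ u₂ p₁ p₂ * v + parabolaB₀ u₁ u₂ p₁ p₂)) ^ 2
      = v ^ 3 + aFun u₁ u₂ p₁ p₂ * v + bFun u₁ u₂ p₁ p₂ := by
  linear_combination parabola_sq_sub_cubic_eq h h₁ h₂ hD v
    + parabolaB₁ u₁ u₂ p₁ p₂ ^ 2 * (v - u₁) * (v - u₂) * hv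

end Parabola

/-- The discrete map `ρ : (u₁,u₂,p₁,p₂) ↦ (v₁,v₂,π₁,π₂)`, sending the pair of
intersection points of the cubic with the parabola through the origin to the
other pair of intersection points, preserves the form of the integrals of
motion `a` and `b`. -/
theorem rho_preserves_integrals (u₁ u₂ p₁ p₂ v₁ v₂ : ℝ)
    (h : u₁ ≠ u₂) (h₁ : u₁ ≠ 0) (h₂ : u₂ ≠ 0) (hD : p₁ * u₂ - p₂ * u₁ ≠ 0)
    (hS : v₁ ≠ v₂)
    (hv₁ : v₁ ^ 2 + ((u₁ - u₂) * (p₁ ^ 2 * u₂ ^ 2 - p₂ ^ 2 * u₁ ^ 2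
        - (u₁ - u₂) * u₁ ^ 2 * u₂ ^ 2) / (p₁ * u₂ - p₂ * u₁) ^ 2) * v₁
      + u₁ * u₂ * (u₁ - u₂) * (p₁ ^ 2 * u₂ - p₂ ^ 2 * u₁
        - u₁ ^ 3 * u₂ + u₁ * u₂ ^ 3) / (p₁ * u₂ - p₂ * u₁) ^ 2 = 0)
    (hv₂ : v₂ ^ 2 + ((u₁ - u₂) * (p₁ ^ 2 * u₂ ^ 2 - p₂ ^ 2 * u₁ ^ 2
        - (u₁ - u₂) * u₁ ^ 2 * u₂ ^ 2) / (p₁ * u₂ - p₂ * u₁) ^ 2) * v₂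
      + u₁ * u₂ * (u₁ - u₂) * (p₁ ^ 2 * u₂ - p₂ ^ 2 * u₁
        - u₁ ^ 3 * u₂ + u₁ * u₂ ^ 3) / (p₁ * u₂ - p₂ * u₁) ^ 2 = 0) :
    let b₁ := (p₁ * u₂ - p₂ * u₁) / (u₁ * u₂ * (u₁ - u₂))
    let b₀ := -(p₁ * u₂ ^ 2 - p₂ * u₁ ^ 2) / (u₁ * u₂ * (u₁ - u₂))
    let π₁ := -v₁ * (b₁ * v₁ + b₀)
    let π₂ := -v₂ * (b₁ * v₂ + b₀)
    aFun v₁ v₂ π₁ π₂ = aFun u₁ u₂ p₁ p₂ ∧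
    bFun v₁ v₂ π₁ π₂ = bFun u₁ u₂ p₁ p₂ :=
  aFun_eq_and_bFun_eq_of_onCurve hS
    (parabola_sq_eq_cubic_of_residual_root h h₁ h₂ hD hv₁)
    (parabola_sq_eq_cubic_of_residual_root h h₁ h₂ hD hv₂)
end
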